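/- arXiv:0808.0075 — 3 statements merged into one kernel-verified Lean document; each statement's English description precedes it below -/
import Mathlib

section
/- Let h₁, h₂ ∈ ℂ^M with ‖h₁‖² = θ₁, ‖h₂‖² = θ₂, both nonzero, and correlation ρ = |h₁ᴴh₂|²/(θ₁θ₂). Set ν ∈ ℝ and A = ν·(h₂*h₁ᴴ + h₁*h₂ᴴ) (the MRR-MRT matrix with equal weights). Then: (i) |h₁ᵀAh₂| = |h₂ᵀAh₁| = |ν|θ₁θ₂(1+ρ'), where ρ' = Re(h₁ᴴh₂·h₂ᴴh₁)/(θ₁θ₂) = ρ; (ii) ‖Ah₁‖² = ν²θ₁²θ₂(1+3ρ); (iii) ‖Ah₂‖² = ν²θ₁θ₂²(1+3ρ); (iv) tr(AAᴴ) = 2ν²θ₁θ₂(1+ρ). -/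
/-!
With `c = h₁ᴴ h₂`, the matrix `A` acts on a vector `x` as
`A x = ν ((h₁ᴴ x) h₂* + (h₂ᴴ x) h₁*)`, so every quantity in the theorem is a polynomial in the
Gram entries `θ₁ = h₁ᴴ h₁`, `θ₂ = h₂ᴴ h₂`, `c` and `c*`, in which `c c* = |c|² = ρ θ₁ θ₂`.
`A` is symmetric in `h₁, h₂`, which exchanges the two cross gains and the two noise norms, and
since `Aᴴ = ν (h₁ h₂ᵀ + h₂ h₁ᵀ)`, also `tr (A Aᴴ) = ν (h₂ᵀ A h₁ + h₁ᵀ A h₂)`.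
-/

open Matrix

section

variable {n : Type*}

/-- `H_DLᴴ diag(ν, ν) H_ULᴴ` with `H_UL = [h₁, h₂]` and `H_DL = [h₂, h₁]ᵀ`. -/
def mrrMrtMatrix (ν : ℝ) (h₁ h₂ : n → ℂ) : Matrix n n ℂ :=
  (ν : ℂ) • (vecMulVec (star h₂) (star h₁) + vecMulVec (star h₁) (star h₂))

variable (ν : ℝ) (h₁ h₂ : n → ℂ)

lemma mrrMrtMatrix_comm : mrrMrtMatrix ν h₁ h₂ = mrrMrtMatrix ν h₂ h₁ := by
  rw [mrrMrtMatrix, add_comm, mrrMrtMatrix]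

lemma conjTranspose_mrrMrtMatrix :
    (mrrMrtMatrix ν h₁ h₂)ᴴ = (ν : ℂ) • (vecMulVec h₁ h₂ + vecMulVec h₂ h₁) := by
  simp [mrrMrtMatrix, conjTranspose_smul, add_comm]

end

section

variable {n : Type*} [Fintype n]

lemma star_dotProduct_self_eq_sum_norm_sq (v : n → ℂ) :
    star v ⬝ᵥ v = ((∑ i, ‖v i‖ ^ 2 : ℝ) : ℂ) := by
  simp [dotProduct, Complex.conj_mul']

lemma dotProduct_star_self_eq_sum_norm_sq (v : n → ℂ) :
    v ⬝ᵥ star v = ((∑ i, ‖v i‖ ^ 2 : ℝ) : ℂ) := by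
  rw [dotProduct_comm, star_dotProduct_self_eq_sum_norm_sq]

lemma dotProduct_star_eq_star_star_dotProduct (v w : n → ℂ) :
    v ⬝ᵥ star w = star (star v ⬝ᵥ w) := by
  rw [star_dotProduct, star_star, dotProduct_comm]

lemma norm_star_dotProduct_comm (v w : n → ℂ) : ‖star w ⬝ᵥ v‖ = ‖star v ⬝ᵥ w‖ := by
  rw [star_dotProduct, norm_star]

lemma trace_mul_vecMulVec {R : Type*} [CommSemiring R] (M : Matrix n n R) (a b : n → R) :
    trace (M * vecMulVec a b) = b ⬝ᵥ (M *ᵥ a) := by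
  rw [mul_vecMulVec, trace_vecMulVec, dotProduct_comm]

variable (ν : ℝ) (h₁ h₂ : n → ℂ)

lemma mrrMrtMatrix_mulVec (x : n → ℂ) :
    mrrMrtMatrix ν h₁ h₂ *ᵥ x =
      (ν : ℂ) • ((star h₁ ⬝ᵥ x) • star h₂ + (star h₂ ⬝ᵥ x) • star h₁) := by
  simp only [mrrMrtMatrix, smul_mulVec, add_mulVec, vecMulVec_mulVec, op_smul_eq_smul]

lemma dotProduct_mrrMrtMatrix_mulVec :
    h₁ ⬝ᵥ (mrrMrtMatrix ν h₁ h₂ *ᵥ h₂) =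
      ((ν * ((∑ i, ‖h₁ i‖ ^ 2) * (∑ i, ‖h₂ i‖ ^ 2) + ‖star h₁ ⬝ᵥ h₂‖ ^ 2) : ℝ) : ℂ) := by
  rw [mrrMrtMatrix_mulVec, dotProduct_smul, dotProduct_add, dotProduct_smul, dotProduct_smul,
    dotProduct_star_eq_star_star_dotProduct h₁ h₂,
    star_dotProduct_self_eq_sum_norm_sq, dotProduct_star_self_eq_sum_norm_sq, smul_eq_mul,
    smul_eq_mul, smul_eq_mul, Complex.star_def, Complex.mul_conj']
  push_cast
  ring

lemma sum_norm_sq_mrrMrtMatrix_mulVec :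
    ∑ i, ‖(mrrMrtMatrix ν h₁ h₂ *ᵥ h₁) i‖ ^ 2 =
      ν ^ 2 * ((∑ i, ‖h₁ i‖ ^ 2) ^ 2 * (∑ i, ‖h₂ i‖ ^ 2)
        + 3 * (∑ i, ‖h₁ i‖ ^ 2) * ‖star h₁ ⬝ᵥ h₂‖ ^ 2) := by
  apply Complex.ofReal_injective
  rw [← star_dotProduct_self_eq_sum_norm_sq, mrrMrtMatrix_mulVec, star_dotProduct h₂ h₁,
    star_dotProduct_self_eq_sum_norm_sq h₁]
  simp only [star_add, star_smul, star_star, dotProduct_add, add_dotProduct, dotProduct_smul,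
    smul_dotProduct, smul_eq_mul, dotProduct_star_self_eq_sum_norm_sq,
    dotProduct_star_eq_star_star_dotProduct h₁ h₂, dotProduct_comm h₂ (star h₁), Complex.star_def,
    Complex.conj_ofReal, Complex.conj_conj]
  push_cast
  rw [← Complex.mul_conj']
  ring

lemma trace_mrrMrtMatrix_mul_conjTranspose :
    (mrrMrtMatrix ν h₁ h₂ * (mrrMrtMatrix ν h₁ h₂)ᴴ).trace =
      ((2 * ν ^ 2 * ((∑ i, ‖h₁ i‖ ^ 2) * (∑ i, ‖h₂ i‖ ^ 2) + ‖star h₁ ⬝ᵥ h₂‖ ^ 2) : ℝ) : ℂ) := by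
  rw [conjTranspose_mrrMrtMatrix, mul_smul_comm, mul_add, trace_smul, trace_add,
    trace_mul_vecMulVec, trace_mul_vecMulVec, dotProduct_mrrMrtMatrix_mulVec, mrrMrtMatrix_comm,
    dotProduct_mrrMrtMatrix_mulVec, norm_star_dotProduct_comm, smul_eq_mul]
  push_cast
  ring

end

/-- Identities for the equal-weight matched-filter relay matrix
A = ν(h₂* h₁ᴴ + h₁* h₂ᴴ): cross gains, forwarded-noise norms, and trace. -/
theorem mrr_mrt_identities (M : ℕ) (h₁ h₂ : Fin M → ℂ) (ν : ℝ)
    (θ₁ θ₂ ρ : ℝ)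
    (hθ₁ : θ₁ = ∑ i, ‖h₁ i‖ ^ 2) (hθ₂ : θ₂ = ∑ i, ‖h₂ i‖ ^ 2)
    (hθ₁pos : 0 < θ₁) (hθ₂pos : 0 < θ₂)
    (hρ : ρ = ‖∑ i, star (h₁ i) * h₂ i‖ ^ 2 / (θ₁ * θ₂))
    (A : Matrix (Fin M) (Fin M) ℂ)
    (hA : A = Matrix.of fun i j =>
      (ν : ℂ) * (star (h₂ i) * star (h₁ j) + star (h₁ i) * star (h₂ j))) :
    ‖h₁ ⬝ᵥ (A *ᵥ h₂)‖ = |ν| * θ₁ * θ₂ * (1 + ρ) ∧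
    ‖h₂ ⬝ᵥ (A *ᵥ h₁)‖ = |ν| * θ₁ * θ₂ * (1 + ρ) ∧
    (∑ i, ‖(A *ᵥ h₁) i‖ ^ 2) = ν ^ 2 * θ₁ ^ 2 * θ₂ * (1 + 3 * ρ) ∧
    (∑ i, ‖(A *ᵥ h₂) i‖ ^ 2) = ν ^ 2 * θ₁ * θ₂ ^ 2 * (1 + 3 * ρ) ∧
    (A * Aᴴ).trace = ((2 * ν ^ 2 * θ₁ * θ₂ * (1 + ρ) : ℝ) : ℂ) := by
  have hc : ‖star h₁ ⬝ᵥ h₂‖ ^ 2 = ρ * (θ₁ * θ₂) := by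
    rw [hρ, div_mul_cancel₀ _ (mul_pos hθ₁pos hθ₂pos).ne']
    rfl
  obtain rfl : A = mrrMrtMatrix ν h₁ h₂ := by
    rw [hA]
    ext i j
    simp [mrrMrtMatrix, vecMulVec_apply]
  subst hθ₁ hθ₂
  have hgain : ‖((ν * ((∑ i, ‖h₁ i‖ ^ 2) * (∑ i, ‖h₂ i‖ ^ 2) + ‖star h₁ ⬝ᵥ h₂‖ ^ 2) : ℝ) : ℂ)‖ =
      |ν| * (∑ i, ‖h₁ i‖ ^ 2) * (∑ i, ‖h₂ i‖ ^ 2) * (1 + ρ) := by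
    rw [Complex.norm_real, norm_mul, Real.norm_eq_abs, Real.norm_of_nonneg (by positivity), hc]
    ring
  refine ⟨?_, ?_, ?_, ?_, ?_⟩
  · rw [dotProduct_mrrMrtMatrix_mulVec, hgain]
  · rw [mrrMrtMatrix_comm, dotProduct_mrrMrtMatrix_mulVec, norm_star_dotProduct_comm,
      mul_comm (∑ i, ‖h₂ i‖ ^ 2), hgain]
  · rw [sum_norm_sq_mrrMrtMatrix_mulVec, hc]
    ring
  · rw [mrrMrtMatrix_comm, sum_norm_sq_mrrMrtMatrix_mulVec, norm_star_dotProduct_comm, hc]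
    ring
  · rw [trace_mrrMrtMatrix_mul_conjTranspose, hc]
    congr 1
    ring
end

section
/- Under the setup of the block decomposition A = U*BUᴴ + U*C(U⊥)ᴴ + (U⊥)*DUᴴ + (U⊥)*E(U⊥)ᴴ with UUᴴh_i = h_i (i=1,2), the relay transmit power p_R(A) = ‖Ah₁‖²p₁ + ‖Ah₂‖²p₂ + tr(AAᴴ) satisfies p_R(A) ≥ p_R(U*BUᴴ), with equality when C = D = E = 0, for any p₁, p₂ ≥ 0. -/
/-!
Write `A = Q X Pᴴ` with `Q = [Ū Ū⊥]`, `P = [U U⊥]` and `X = [[B, C], [D, E]]`, where `Ū = U.map star`.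
Both `Q` and `P` have orthonormal columns, and `Pᴴ hᵢ = (Uᴴ hᵢ, 0)` because `hᵢ` lies in the column
space of `U`. Hence `p_R(A)` only sees `X`: it is `Σ pᵢ ‖X (Uᴴ hᵢ, 0)‖²` plus the squared Frobenius
norm of `X`, and replacing `C`, `D`, `E` by zero can only decrease each term.
-/

open Matrix

section
variable {𝕜 : Type*} [RCLike 𝕜] {m n : Type*} [Fintype m] [Fintype n]

lemma re_star_dotProduct_self (v : n → 𝕜) : RCLike.re (star v ⬝ᵥ v) = ∑ i, ‖v i‖ ^ 2 := by
  simp only [dotProduct, Pi.star_apply, RCLike.star_def, RCLike.conj_mul, map_sum,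
    ← RCLike.ofReal_pow, RCLike.ofReal_re]

lemma re_trace_mul_conjTranspose_self (X : Matrix m n 𝕜) :
    RCLike.re (X * Xᴴ).trace = ∑ i, ∑ j, ‖X i j‖ ^ 2 := by
  simp only [trace, diag_apply, mul_apply, conjTranspose_apply, RCLike.star_def, RCLike.mul_conj,
    map_sum, ← RCLike.ofReal_pow, RCLike.ofReal_re]

lemma sum_norm_sq_mulVec_of_conjTranspose_mul_self_eq_one [DecidableEq n] {Q : Matrix m n 𝕜}
    (hQ : Qᴴ * Q = 1) (v : n → 𝕜) : ∑ i, ‖(Q *ᵥ v) i‖ ^ 2 = ∑ i, ‖v i‖ ^ 2 := by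
  rw [← re_star_dotProduct_self, ← re_star_dotProduct_self, star_mulVec, ← dotProduct_mulVec,
    mulVec_mulVec, hQ, one_mulVec]
end

section
variable {R : Type*} [CommRing R] [StarRing R] {m k l n₁ n₂ : Type*}

lemma trace_mul_conjTranspose_self_of_isometries [Fintype m] [Fintype k] [Fintype n₁]
    [Fintype n₂] [DecidableEq k] [DecidableEq n₂] {Q : Matrix m k R} {P : Matrix n₁ n₂ R}
    (hQ : Qᴴ * Q = 1) (hP : Pᴴ * P = 1) (X : Matrix k n₂ R) :
    (Q * X * Pᴴ * (Q * X * Pᴴ)ᴴ).trace = (X * Xᴴ).trace := by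
  rw [conjTranspose_mul, conjTranspose_mul, conjTranspose_conjTranspose,
    show Q * X * Pᴴ * (P * (Xᴴ * Qᴴ)) = Q * (X * (Pᴴ * P) * Xᴴ * Qᴴ) by
      simp only [Matrix.mul_assoc],
    trace_mul_comm, hP, Matrix.mul_one, Matrix.mul_assoc, Matrix.mul_assoc, hQ, Matrix.mul_one]

lemma conjTranspose_map_star_mul_map_star [Fintype m] (X : Matrix m k R) (Y : Matrix m l R) :
    (X.map star)ᴴ * Y.map star = (Xᴴ * Y).map star := by
  ext i j
  simp [mul_apply, mul_comm]

lemma conjTranspose_mul_eq_zero_of_mul_conjTranspose_eq_one_sub [Fintype m] [Fintype k] [Fintype l]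
    [DecidableEq m] [DecidableEq k] [DecidableEq l]
    {U : Matrix m k R} {U' : Matrix m l R} (hU : Uᴴ * U = 1) (hU' : U'ᴴ * U' = 1)
    (h : U' * U'ᴴ = 1 - U * Uᴴ) : U'ᴴ * U = 0 :=
  calc U'ᴴ * U = U'ᴴ * (U' * U'ᴴ) * U := by rw [← Matrix.mul_assoc, hU', Matrix.one_mul]
    _ = U'ᴴ * (U - U * (Uᴴ * U)) := by
      rw [h, Matrix.mul_assoc, Matrix.sub_mul, Matrix.one_mul, Matrix.mul_assoc]
    _ = 0 := by rw [hU, Matrix.mul_one, sub_self, Matrix.mul_zero]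

lemma conjTranspose_fromCols_mul_fromCols_eq_one [Fintype m] [DecidableEq k] [DecidableEq l]
    {V : Matrix m k R} {W : Matrix m l R}
    (hV : Vᴴ * V = 1) (hW : Wᴴ * W = 1) (hVW : Vᴴ * W = 0) :
    (fromCols V W)ᴴ * fromCols V W = 1 := by
  have hWV : Wᴴ * V = 0 := by simpa using congrArg conjTranspose hVW
  rw [conjTranspose_fromCols_eq_fromRows_conjTranspose, fromRows_mul_fromCols, hV, hW, hVW, hWV,
    fromBlocks_one]

lemma fromCols_mul_fromBlocks_mul_conjTranspose_fromCols [Fintype k] [Fintype l]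
    [Fintype n₁] [Fintype n₂]
    (V : Matrix m k R) (W : Matrix m l R) (U : Matrix m n₁ R) (U' : Matrix m n₂ R)
    (B : Matrix k n₁ R) (C : Matrix k n₂ R) (D : Matrix l n₁ R) (E : Matrix l n₂ R) :
    fromCols V W * fromBlocks B C D E * (fromCols U U')ᴴ
      = V * B * Uᴴ + V * C * U'ᴴ + W * D * Uᴴ + W * E * U'ᴴ := by
  rw [conjTranspose_fromCols_eq_fromRows_conjTranspose, fromCols_mul_fromBlocks,
    fromCols_mul_fromRows]
  simp only [Matrix.add_mul, Matrix.mul_assoc]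
  abel

lemma conjTranspose_fromCols_mulVec_of_mulVec_eq [Fintype m] [Fintype k] {U : Matrix m k R}
    {U' : Matrix m l R} (hU'U : U'ᴴ * U = 0) {v : m → R} (hv : (U * Uᴴ) *ᵥ v = v) :
    (fromCols U U')ᴴ *ᵥ v = Sum.elim (Uᴴ *ᵥ v) 0 := by
  rw [conjTranspose_fromCols_eq_fromRows_conjTranspose, fromRows_mulVec]
  congr 1
  rw [← hv, mulVec_mulVec, ← Matrix.mul_assoc, hU'U, Matrix.zero_mul, zero_mulVec]
end

section
variable {𝕜 : Type*} [RCLike 𝕜] {k l n₁ n₂ : Type*} [Fintype k] [Fintype l] [Fintype n₁]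
  [Fintype n₂]

lemma sum_norm_sq_fromBlocks_mulVec_sumElim_le (B : Matrix k n₁ 𝕜) (C : Matrix k n₂ 𝕜)
    (D : Matrix l n₁ 𝕜) (E : Matrix l n₂ 𝕜) (a : n₁ → 𝕜) :
    ∑ i, ‖(fromBlocks B 0 0 (0 : Matrix l n₂ 𝕜) *ᵥ Sum.elim a 0) i‖ ^ 2
      ≤ ∑ i, ‖(fromBlocks B C D E *ᵥ Sum.elim a 0) i‖ ^ 2 := by
  simp only [fromBlocks_mulVec, Sum.elim_comp_inl, Sum.elim_comp_inr, mulVec_zero, add_zero,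
    zero_mulVec, Fintype.sum_sum_type, Sum.elim_inl, Sum.elim_inr, Pi.zero_apply, norm_zero, ne_eq,
    OfNat.ofNat_ne_zero, not_false_eq_true, zero_pow, Finset.sum_const_zero,
    le_add_iff_nonneg_right]
  positivity

lemma re_trace_fromBlocks_mul_conjTranspose_le (B : Matrix k n₁ 𝕜) (C : Matrix k n₂ 𝕜)
    (D : Matrix l n₁ 𝕜) (E : Matrix l n₂ 𝕜) :
    RCLike.re
        (fromBlocks B 0 0 (0 : Matrix l n₂ 𝕜) * (fromBlocks B 0 0 (0 : Matrix l n₂ 𝕜))ᴴ).trace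
      ≤ RCLike.re (fromBlocks B C D E * (fromBlocks B C D E)ᴴ).trace := by
  simp only [re_trace_mul_conjTranspose_self, Fintype.sum_sum_type, fromBlocks_apply₁₁,
    fromBlocks_apply₁₂, fromBlocks_apply₂₁, fromBlocks_apply₂₂, Matrix.zero_apply, norm_zero, ne_eq,
    OfNat.ofNat_ne_zero, not_false_eq_true, zero_pow, Finset.sum_const_zero, add_zero]
  exact le_add_of_le_of_nonneg
    (Finset.sum_le_sum fun i _ => le_add_of_nonneg_right (by positivity)) (by positivity)
end

/-- Relay power is minimized by keeping only the B-block: with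
A = U*BUᴴ + U*C(U⊥)ᴴ + (U⊥)*DUᴴ + (U⊥)*E(U⊥)ᴴ and UUᴴhᵢ = hᵢ,
p_R(A) ≥ p_R(U*BUᴴ), with equality when C = D = E = 0. -/
theorem relay_power_minimized_by_B_block (M : ℕ)
    (h₁ h₂ : Fin M → ℂ) (p₁ p₂ : ℝ) (hp₁ : 0 ≤ p₁) (hp₂ : 0 ≤ p₂)
    (U : Matrix (Fin M) (Fin 2) ℂ) (hU : Uᴴ * U = 1)
    (hUh₁ : (U * Uᴴ) *ᵥ h₁ = h₁) (hUh₂ : (U * Uᴴ) *ᵥ h₂ = h₂)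
    (Uperp : Matrix (Fin M) (Fin (M - 2)) ℂ)
    (hUperp : Uperp * Uperpᴴ = 1 - U * Uᴴ) (hUperpOrtho : Uperpᴴ * Uperp = 1)
    (B : Matrix (Fin 2) (Fin 2) ℂ) (C : Matrix (Fin 2) (Fin (M - 2)) ℂ)
    (D : Matrix (Fin (M - 2)) (Fin 2) ℂ) (E : Matrix (Fin (M - 2)) (Fin (M - 2)) ℂ)
    (pR : Matrix (Fin M) (Fin M) ℂ → ℝ)
    (hpR : pR = fun A => (∑ i, ‖(A *ᵥ h₁) i‖ ^ 2) * p₁ + (∑ i, ‖(A *ᵥ h₂) i‖ ^ 2) * p₂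
        + (A * Aᴴ).trace.re)
    (A : Matrix (Fin M) (Fin M) ℂ)
    (hA : A = U.map star * B * Uᴴ + U.map star * C * Uperpᴴ
        + Uperp.map star * D * Uᴴ + Uperp.map star * E * Uperpᴴ) :
    pR (U.map star * B * Uᴴ) ≤ pR A ∧
    (C = 0 → D = 0 → E = 0 → pR A = pR (U.map star * B * Uᴴ)) := by
  have hUperpU : Uperpᴴ * U = 0 :=
    conjTranspose_mul_eq_zero_of_mul_conjTranspose_eq_one_sub hU hUperpOrtho hUperp
  have hUUperp : Uᴴ * Uperp = 0 := by simpa using congrArg conjTranspose hUperpU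
  set Q : Matrix (Fin M) (Fin 2 ⊕ Fin (M - 2)) ℂ := fromCols (U.map star) (Uperp.map star)
  set P : Matrix (Fin M) (Fin 2 ⊕ Fin (M - 2)) ℂ := fromCols U Uperp
  have hQ : Qᴴ * Q = 1 := by
    refine conjTranspose_fromCols_mul_fromCols_eq_one ?_ ?_ ?_ <;>
      rw [conjTranspose_map_star_mul_map_star]
    · rw [hU, Matrix.map_one _ (star_zero _) (star_one _)]
    · rw [hUperpOrtho, Matrix.map_one _ (star_zero _) (star_one _)]
    · rw [hUUperp, Matrix.map_zero _ (star_zero _)]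
  have hP : Pᴴ * P = 1 := conjTranspose_fromCols_mul_fromCols_eq_one hU hUperpOrtho hUUperp
  have hPh₁ : Pᴴ *ᵥ h₁ = _ := conjTranspose_fromCols_mulVec_of_mulVec_eq hUperpU hUh₁
  have hPh₂ : Pᴴ *ᵥ h₂ = _ := conjTranspose_fromCols_mulVec_of_mulVec_eq hUperpU hUh₂
  have hpR_eq (X : Matrix (Fin 2 ⊕ Fin (M - 2)) (Fin 2 ⊕ Fin (M - 2)) ℂ) :
      pR (Q * X * Pᴴ) = (∑ i, ‖(X *ᵥ Sum.elim (Uᴴ *ᵥ h₁) 0) i‖ ^ 2) * p₁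
        + (∑ i, ‖(X *ᵥ Sum.elim (Uᴴ *ᵥ h₂) 0) i‖ ^ 2) * p₂ + RCLike.re (X * Xᴴ).trace := by
    simp only [hpR, ← mulVec_mulVec, sum_norm_sq_mulVec_of_conjTranspose_mul_self_eq_one hQ,
      hPh₁, hPh₂, trace_mul_conjTranspose_self_of_isometries hQ hP, RCLike.re_to_complex]
  have hA₀ : Q * fromBlocks B 0 0 (0 : Matrix (Fin (M - 2)) (Fin (M - 2)) ℂ) * Pᴴ
      = U.map star * B * Uᴴ :=
    (fromCols_mul_fromBlocks_mul_conjTranspose_fromCols _ _ _ _ B 0 0 0).trans (by simp)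
  rw [← hA₀, hA, ← fromCols_mul_fromBlocks_mul_conjTranspose_fromCols]
  refine ⟨?_, ?_⟩
  · rw [hpR_eq, hpR_eq]
    gcongr ?_ * p₁ + ?_ * p₂ + ?_
    · exact sum_norm_sq_fromBlocks_mulVec_sumElim_le B C D E _
    · exact sum_norm_sq_fromBlocks_mulVec_sumElim_le B C D E _
    · exact re_trace_fromBlocks_mul_conjTranspose_le B C D E
  · rintro rfl rfl rfl
    rfl
end

section
/- For the symmetric two-way relay channel with θ₁ = θ₂ = θ and p₁ = p₂ = P_R = P, let C_UB^(S) = log₂(1 + θP/(3 + 1/(θP))) be the sum-capacity upper bound, and let R_LB^MR be the MRR-MRT lower bound with ρ-dependence, obtained from equation (22) with θ₁ = θ₂ = θ, p₁ = p₂ = P_R = P, i.e. R_LB^MR = 2·(1/2)log₂(1 + θP/((1 + (1+θ/θ)P/P)·(1+3ρ)/(1+ρ)² + 2/(θ(1+ρ)P))). Then lim_{P→∞} [C_UB^(S) − R_LB^MR] = log₂((1+3ρ)/(1+ρ)²). -/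
open Filter Real

/-- Symmetric TWRC asymptotic gap of MRR-MRT: with θ₁ = θ₂ = θ and p₁ = p₂ = P_R = P,
C_UB^(S)(P) − R_LB^MR(P) → log₂((1+3ρ)/(1+ρ)²) as P → ∞. -/
theorem symmetric_twrc_mrr_mrt_asymptotic_gap (θ ρ : ℝ)
    (hθ : 0 < θ) (hρ0 : 0 ≤ ρ) (hρ1 : ρ ≤ 1)
    (C_UB R_LB : ℝ → ℝ)
    (hC : C_UB = fun P => Real.logb 2 (1 + θ * P / (3 + 1 / (θ * P))))
    (hR : R_LB = fun P => Real.logb 2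
      (1 + θ * P / (3 * ((1 + 3 * ρ) / (1 + ρ) ^ 2) + 2 / (θ * (1 + ρ) * P)))) :
    Tendsto (fun P => C_UB P - R_LB P) atTop
      (nhds (Real.logb 2 ((1 + 3 * ρ) / (1 + ρ) ^ 2))) := by
  have hρ : (0:ℝ) < 1 + ρ := by linarith
  set k : ℝ := (1 + 3 * ρ) / (1 + ρ) ^ 2 with hkdef
  have hk : 0 < k := div_pos (by linarith) (by positivity)
  set g : ℝ → ℝ := fun u =>
    ((θ^2 + 3*θ*u + u^2) * (3*k*θ*(1+ρ) + 2*u)) /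
      ((3*θ + u) * (θ^2*(1+ρ) + 3*k*θ*(1+ρ)*u + 2*u^2)) with hg
  have hg0 : g 0 = k := by
    simp only [hg]
    field_simp
    ring
  have hcont : ContinuousAt g 0 := by
    apply ContinuousAt.div
    · fun_prop
    · fun_prop
    · have : (0:ℝ) < (3*θ + 0) * (θ^2*(1+ρ) + 3*k*θ*(1+ρ)*0 + 2*0^2) := by
        norm_num; positivity
      exact this.ne'
  have h1 : Tendsto (fun P : ℝ => g P⁻¹) atTop (nhds k) := by
    rw [← hg0]
    exact hcont.tendsto.comp tendsto_inv_atTop_zero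
  have h2 : Tendsto (fun P : ℝ => Real.logb 2 (g P⁻¹)) atTop (nhds (Real.logb 2 k)) := by
    have hc : ContinuousAt (Real.logb 2) k := Real.continuousAt_logb hk.ne'
    exact hc.tendsto.comp h1
  apply h2.congr'
  filter_upwards [eventually_gt_atTop 0] with P hP
  have hθP : 0 < θ * P := mul_pos hθ hP
  have hA : 0 < 1 + θ * P / (3 + 1 / (θ * P)) := by positivity
  have hB : 0 < 1 + θ * P / (3 * k + 2 / (θ * (1 + ρ) * P)) := by positivity
  rw [hC, hR]
  simp only
  rw [← Real.logb_div hA.ne' hB.ne']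
  congr 1
  have h1 : (3 + 1 / (θ * P)) ≠ 0 := by positivity
  have h2 : (3 * k + 2 / (θ * (1 + ρ) * P)) ≠ 0 := by positivity
  have h3 : (3*θ + P⁻¹) ≠ 0 := by positivity
  have h4 : (θ^2*(1+ρ) + 3*k*θ*(1+ρ)*P⁻¹ + 2*(P⁻¹)^2) ≠ 0 := by positivity
  have hP' : P ≠ 0 := hP.ne'
  have hθ' : θ ≠ 0 := hθ.ne'
  have hρ' : (1+ρ) ≠ 0 := hρ.ne'
  simp only [hg]
  rw [div_eq_div_iff (by positivity) hB.ne']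
  field_simp
  ring
end
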